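/- Let K be a field, < a monomial order on the monomials of S = K[X_1,…,X_n], X ⊆ K^n a finite set, I := I(X), and D a distinguished order ideal of monomials with respect to <. Then the evaluation map ev_D^X : S_D → K^X is surjective if and only if N(I) ⊆ D. -/

import Mathlib

open MvPolynomial
open scoped MonomialOrder

/-- `α` is the leading monomial (exponent) of `p` with respect to the monomial order `m`. -/
def IsLeadMon {K : Type*} [Field K] {n : ℕ} (m : MonomialOrder (Fin n))
    (p : MvPolynomial (Fin n) K) (α : Fin n →₀ ℕ) : Prop :=
  α ∈ p.support ∧ ∀ β ∈ p.support, β ≠ α → β ≺[m] α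

/-- The normal set `N(I) = Mon(S) \ in(I)`. -/
def normalSet {K : Type*} [Field K] {n : ℕ} (m : MonomialOrder (Fin n))
    (I : Ideal (MvPolynomial (Fin n) K)) : Set (Fin n →₀ ℕ) :=
  {β | ¬ ∃ p ∈ I, ∃ α, IsLeadMon m p α ∧ ∃ γ, β = α + γ}

/-- Multivariate interpolation on a finite set of points. -/
lemma exists_interpolation {K : Type*} [Field K] {n : ℕ}
    (X : Finset (Fin n → K)) (g : (Fin n → K) → K) :
    ∃ p : MvPolynomial (Fin n) K, ∀ x ∈ X, MvPolynomial.eval x p = g x := by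
  classical
  have hind : ∀ x : Fin n → K, ∃ p : MvPolynomial (Fin n) K,
      MvPolynomial.eval x p = 1 ∧ ∀ y ∈ X, y ≠ x → MvPolynomial.eval y p = 0 := by
    intro x
    have hfac : ∀ y : Fin n → K, ∃ q : MvPolynomial (Fin n) K,
        y ≠ x → MvPolynomial.eval x q = 1 ∧ MvPolynomial.eval y q = 0 := by
      intro y
      by_cases hy : y = x
      · exact ⟨1, fun h => absurd hy h⟩
      · obtain ⟨i, hi⟩ := Function.ne_iff.mp hy
        refine ⟨(MvPolynomial.X i - C (y i)) * C (x i - y i)⁻¹, fun _ => ⟨?_, ?_⟩⟩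
        · have : x i - y i ≠ 0 := sub_ne_zero.mpr (Ne.symm hi)
          simp [mul_inv_cancel₀ this]
        · simp
    choose q hq using hfac
    refine ⟨∏ y ∈ X.erase x, q y, ?_, ?_⟩
    · rw [map_prod]
      exact Finset.prod_eq_one fun y hy => (hq y (Finset.ne_of_mem_erase hy)).1
    · intro y hy hyx
      rw [map_prod]
      exact Finset.prod_eq_zero (Finset.mem_erase.mpr ⟨hyx, hy⟩) (hq y hyx).2
  choose P hP1 hP2 using hind
  refine ⟨∑ x ∈ X, C (g x) * P x, fun z hz => ?_⟩
  rw [map_sum]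
  rw [Finset.sum_eq_single z]
  · simp [hP1 z]
  · intro x hx hxz
    simp [hP2 x z hz (fun h => hxz h.symm)]
  · intro h; exact absurd hz h

/-- Every polynomial is congruent mod `I` to one supported on the normal set. -/
lemma exists_normal_form {K : Type*} [Field K] {n : ℕ} (m : MonomialOrder (Fin n))
    (I : Ideal (MvPolynomial (Fin n) K)) (p : MvPolynomial (Fin n) K) :
    ∃ q, p - q ∈ I ∧ ∀ β ∈ q.support, β ∈ normalSet m I := by
  classical
  suffices H : ∀ s : m.syn, ∀ p : MvPolynomial (Fin n) K,
      (∀ β ∈ p.support, β ∉ normalSet m I → m.toSyn β ≤ s) →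
      ∃ q, p - q ∈ I ∧ ∀ β ∈ q.support, β ∈ normalSet m I by
    exact H (p.support.sup fun β => m.toSyn β) p
      (fun β hβ _ => Finset.le_sup (f := fun β => m.toSyn β) hβ)
  intro s
  induction s using WellFoundedLT.induction with
  | _ s IH =>
  intro p hbound
  by_cases hgood : ∀ β ∈ p.support, β ∈ normalSet m I
  · exact ⟨p, by simp [I.zero_mem], hgood⟩
  · have hBne : (p.support.filter (fun β => β ∉ normalSet m I)).Nonempty := by
      push_neg at hgood
      obtain ⟨β, hβ, hβ'⟩ := hgood
      exact ⟨β, Finset.mem_filter.mpr ⟨hβ, hβ'⟩⟩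
    obtain ⟨β, hβB, hβmax⟩ := Finset.exists_max_image _ (fun β => m.toSyn β) hBne
    have hβsup : β ∈ p.support := (Finset.mem_filter.mp hβB).1
    have hβbad : β ∉ normalSet m I := (Finset.mem_filter.mp hβB).2
    rw [normalSet, Set.mem_setOf_eq, not_not] at hβbad
    obtain ⟨f, hfI, α, ⟨hαsup, hαmax⟩, γ, hβαγ⟩ := hβbad
    have hfα : f.coeff α ≠ 0 := mem_support_iff.mp hαsup
    set r : MvPolynomial (Fin n) K := monomial γ (p.coeff β / f.coeff α) * f with hr
    have hrI : r ∈ I := I.mul_mem_left _ hfI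
    set p' : MvPolynomial (Fin n) K := p - r with hp'
    -- every monomial of r is ≤ β
    have hrle : ∀ δ ∈ r.support, m.toSyn δ ≤ m.toSyn β := by
      intro δ hδ
      have hδc : r.coeff δ ≠ 0 := mem_support_iff.mp hδ
      rw [hr, coeff_monomial_mul'] at hδc
      by_cases hγδ : γ ≤ δ
      · rw [if_pos hγδ] at hδc
        have hmem : δ - γ ∈ f.support := by
          rw [mem_support_iff]
          intro h0
          rw [h0, mul_zero] at hδc
          exact hδc rfl
        have hle : m.toSyn (δ - γ) ≤ m.toSyn α := by
          by_cases h : δ - γ = α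
          · rw [h]
          · exact le_of_lt (hαmax _ hmem h)
        have : m.toSyn δ = m.toSyn γ + m.toSyn (δ - γ) := by
          rw [← map_add, add_tsub_cancel_of_le hγδ]
        rw [this, hβαγ, map_add]
        rw [add_comm (m.toSyn α) (m.toSyn γ)]
        exact add_le_add le_rfl hle
      · rw [if_neg hγδ] at hδc
        exact absurd rfl hδc
    -- coefficient of β in p' vanishes
    have hcoeffβ : p'.coeff β = 0 := by
      have hβ' : β = γ + α := by rw [hβαγ, add_comm]
      rw [hp', coeff_sub, hr, hβ', coeff_monomial_mul, div_mul_cancel₀ _ hfα, sub_self]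
    -- bad monomials of p' are strictly below β
    have hkey : ∀ δ ∈ p'.support, δ ∉ normalSet m I → m.toSyn δ < m.toSyn β := by
      intro δ hδ hδbad
      have hδβ : δ ≠ β := by
        intro h; rw [h] at hδ; exact (mem_support_iff.mp hδ) hcoeffβ
      have hne : m.toSyn δ ≠ m.toSyn β := fun h => hδβ (m.toSyn.injective h)
      have hδ' : δ ∈ p.support ∪ r.support := by
        have := support_sub (σ := Fin n) p r hδ
        simpa using this
      rcases Finset.mem_union.mp hδ' with h | h
      · exact lt_of_le_of_ne (hβmax δ (Finset.mem_filter.mpr ⟨h, hδbad⟩)) hne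
      · exact lt_of_le_of_ne (hrle δ h) hne
    by_cases hgood' : ∀ δ ∈ p'.support, δ ∈ normalSet m I
    · refine ⟨p', ?_, hgood'⟩
      have : p - p' = r := by rw [hp']; ring
      rw [show p - p' = r from this]
      exact hrI
    · have hBne' : (p'.support.filter (fun δ => δ ∉ normalSet m I)).Nonempty := by
        push_neg at hgood'
        obtain ⟨δ, hδ, hδ'⟩ := hgood'
        exact ⟨δ, Finset.mem_filter.mpr ⟨hδ, hδ'⟩⟩
      obtain ⟨β', hβ'B, hβ'max⟩ := Finset.exists_max_image _ (fun δ => m.toSyn δ) hBne'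
      have hβ's : m.toSyn β' < s := by
        refine lt_of_lt_of_le ?_ (hbound β hβsup ?_)
        · exact hkey β' (Finset.mem_filter.mp hβ'B).1 (Finset.mem_filter.mp hβ'B).2
        · rw [normalSet, Set.mem_setOf_eq, not_not]
          exact ⟨f, hfI, α, ⟨hαsup, hαmax⟩, γ, hβαγ⟩
      obtain ⟨q, hq, hqN⟩ := IH (m.toSyn β') hβ's p'
        (fun δ hδ hδbad => hβ'max δ (Finset.mem_filter.mpr ⟨hδ, hδbad⟩))
      refine ⟨q, ?_, hqN⟩
      have : p - q = r + (p' - q) := by rw [hp']; ring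
      rw [this]
      exact I.add_mem hrI hq

/-- Let `m` be a monomial order, `X ⊆ K^n` finite, `I := I(X)`, and `D` a
distinguished order ideal of monomials (closed under divisors, and `t < s` for all
`t ∈ D`, `s ∉ D`).  Then `ev_D^X : S_D → K^X` is surjective if and only if `N(I) ⊆ D`. -/
theorem stmt7 (K : Type*) [Field K] (n : ℕ) (m : MonomialOrder (Fin n))
    (X : Finset (Fin n → K)) (D : Set (Fin n →₀ ℕ))
    (hOI : ∀ β ∈ D, ∀ α γ : Fin n →₀ ℕ, α + γ = β → α ∈ D)
    (hDist : ∀ t ∈ D, ∀ s : Fin n →₀ ℕ, s ∉ D → (t ≺[m] s)) :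
    (∀ g : (Fin n → K) → K, ∃ p : MvPolynomial (Fin n) K,
        (∀ β ∈ p.support, β ∈ D) ∧ ∀ x ∈ X, MvPolynomial.eval x p = g x)
      ↔ normalSet m (MvPolynomial.vanishingIdeal K (X : Set (Fin n → K))) ⊆ D := by
  classical
  constructor
  · intro H β hβN
    by_contra hβD
    obtain ⟨p, hpD, hpe⟩ := H (fun x => MvPolynomial.eval x (monomial β (1 : K)))
    set f : MvPolynomial (Fin n) K := monomial β (1 : K) - p with hf
    have hfI : f ∈ MvPolynomial.vanishingIdeal K (X : Set (Fin n → K)) := by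
      rw [mem_vanishingIdeal_iff]
      intro x hx
      rw [hf, map_sub, MvPolynomial.aeval_eq_eval, hpe x (Finset.mem_coe.mp hx), sub_self]
    have hpβ : p.coeff β = 0 := by
      by_contra h
      exact hβD (hpD β (mem_support_iff.mpr h))
    have hfβ : f.coeff β = 1 := by
      rw [hf, coeff_sub, coeff_monomial, if_pos rfl, hpβ, sub_zero]
    have hβsup : β ∈ f.support := mem_support_iff.mpr (by rw [hfβ]; exact one_ne_zero)
    have hlead : IsLeadMon m f β := by
      refine ⟨hβsup, fun δ hδ hδβ => ?_⟩
      have hδ' : δ ∈ (monomial β (1 : K)).support ∪ p.support := by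
        have := support_sub (σ := Fin n) (monomial β (1 : K)) p hδ
        simpa using this
      have hδD : δ ∈ D := by
        rcases Finset.mem_union.mp hδ' with h | h
        · exfalso
          have := support_monomial_subset h
          simp only [Finset.mem_singleton] at this
          exact hδβ this
        · exact hpD δ h
      exact hDist δ hδD β hβD
    exact hβN ⟨f, hfI, β, hlead, 0, (add_zero β).symm⟩
  · intro hND g
    obtain ⟨p0, hp0⟩ := exists_interpolation X g
    obtain ⟨q, hq, hqN⟩ :=
      exists_normal_form m (MvPolynomial.vanishingIdeal K (X : Set (Fin n → K))) p0
    refine ⟨q, fun β hβ => hND (hqN β hβ), fun x hx => ?_⟩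
    have h0 := (mem_vanishingIdeal_iff.mp hq) x (Finset.mem_coe.mpr hx)
    rw [map_sub, sub_eq_zero, MvPolynomial.aeval_eq_eval] at h0
    rw [← h0, hp0 x hx]
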